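/- arXiv:1012.1796 — 4 statements merged into one kernel-verified Lean document; each statement's English description precedes it below -/
import Mathlib

section
/- For any alphabet A = {0,...,t-1} with t ≥ 2 and any n ≥ 1, there exists a cyclic sequence of length t^n over A in which every word of length n appears exactly once as a block of contiguous symbols (a de Bruijn sequence of order n). -/
namespace DeBruijnPaper

/-- The word (block) of length `n` starting at position `i` of the sequence `a`. -/
def wordAt {t : ℕ} (a : ℕ → Fin t) (n i : ℕ) : Fin n → Fin t :=
  fun j => a (i + (j : ℕ))

/-- `w` has appeared as a block entirely within the first `k` symbols of `a`. -/
def Seen {t : ℕ} (a : ℕ → Fin t) (n k : ℕ) (w : Fin n → Fin t) : Prop :=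
  ∃ p, p + n ≤ k ∧ wordAt a n p = w

/-- The candidate `n`-word whose last symbol (at position `k`) is replaced by `c`,
preceded by the `n-1` symbols `a (k-(n-1)), …, a (k-1)`. -/
def cand {t : ℕ} (a : ℕ → Fin t) (n k : ℕ) (c : Fin t) : Fin n → Fin t :=
  fun j => if (j : ℕ) + 1 = n then c else a (k - (n - 1) + (j : ℕ))

/-- `P` is a preference function of span `m`: to each word of length `m` it assigns a
priority listing of the alphabet, i.e. `P w : Fin t → Fin t` is a bijection,
`P w i` being the `i`-th preferred symbol after the word `w`. -/
def IsPrefFun (t m : ℕ) (P : (Fin m → Fin t) → Fin t → Fin t) : Prop :=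
  ∀ w, Function.Bijective (P w)

/-- The sequence `a` (of length `L`) is produced by the greedy Algorithm P for the
preference function `P` of span `m`, at order `n`, from the initial word `I`:
it starts with `I`, every `n`-word occurs at most once, each appended symbol is the
highest-priority symbol (priorities determined by the last `m` symbols) forming a
new `n`-word, and the sequence is maximal (cannot be extended). -/
structure GenSeqFrom (t m n : ℕ) (I : Fin n → Fin t)
    (P : (Fin m → Fin t) → Fin t → Fin t) (a : ℕ → Fin t) (L : ℕ) : Prop where
  len_ge : n ≤ L
  init : ∀ j : Fin n, a (j : ℕ) = I j
  inj : ∀ i j, i + n ≤ L → j + n ≤ L → wordAt a n i = wordAt a n j → i = j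
  greedy : ∀ k, n ≤ k → k < L → ∃ i : Fin t,
    a k = P (wordAt a m (k - m)) i ∧
    ∀ j : Fin t, j < i → Seen a n k (cand a n k (P (wordAt a m (k - m)) j))
  maximal : ∀ c : Fin t, Seen a n L (cand a n L c)

/-- The sequence `a` of length `L` contains every `n`-word over the alphabet. -/
def Full (t n : ℕ) (a : ℕ → Fin t) (L : ℕ) : Prop :=
  ∀ w : Fin n → Fin t, ∃ p, p + n ≤ L ∧ wordAt a n p = w

/-- The all-zero word `0^n`. -/
def zeroWord (t n : ℕ) [NeZero t] : Fin n → Fin t := fun _ => 0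

/-- The least preference function induced by `P`:
`g(a_1,…,a_m) = (a_2,…,a_m, P_t(a_1,…,a_m))`. -/
def leastPF {t m : ℕ} (ht : 0 < t) (P : (Fin m → Fin t) → Fin t → Fin t)
    (w : Fin m → Fin t) : Fin m → Fin t :=
  fun j => if h : (j : ℕ) + 1 = m then P w ⟨t - 1, Nat.sub_lt ht Nat.one_pos⟩
           else w ⟨(j : ℕ) + 1, by have := j.isLt; omega⟩

/-- `g` has no cycles of any length other than the self-loop at the all-zero word. -/
def OnlyZeroCycle {t m : ℕ} [NeZero t] (g : (Fin m → Fin t) → Fin m → Fin t) : Prop :=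
  g (fun _ => 0) = (fun _ => 0) ∧
  ∀ (x : Fin m → Fin t) (l : ℕ), 0 < l → g^[l] x = x → x = fun _ => 0

/-- Extend a finite sequence by zeros to a sequence indexed by `ℕ`. -/
def ext {t L : ℕ} [NeZero t] (S : Fin L → Fin t) : ℕ → Fin t :=
  fun i => if h : i < L then S ⟨i, h⟩ else 0

section Greedy

open scoped Classical

variable (t n : ℕ) [NeZero t]

/-- candidate window ending at position `k` (window starts at `k-n+1`) with last symbol `c`. -/
def candW (b : ℕ → Fin t) (k : ℕ) (c : Fin t) : Fin n → Fin t :=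
  fun j => if (j : ℕ) = n - 1 then c else b (k - n + 1 + (j : ℕ))

/-- symbols that would create a brand-new window at position `k - n + 1`. -/
noncomputable def good (b : ℕ → Fin t) (k : ℕ) : Finset (Fin t) :=
  Finset.univ.filter (fun c => ∀ p < k - n + 1, wordAt b n p ≠ candW t n b k c)

noncomputable def nxt (b : ℕ → Fin t) (k : ℕ) : Fin t :=
  if k < n then 0 else if h : (good t n b k).Nonempty then (good t n b k).max' h else 0

noncomputable def gseq : ℕ → (ℕ → Fin t)
  | 0 => fun _ => 0
  | (k+1) => Function.update (gseq k) k (nxt t n (gseq k) k)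

noncomputable def A : ℕ → Fin t := fun i => gseq t n (i+1) i

variable {t n}

lemma gseq_stable : ∀ m i, i < m → gseq t n m i = A t n i := by
  intro m
  induction m with
  | zero => intro i h; omega
  | succ m ih =>
    intro i h
    rcases Nat.lt_or_ge i m with h' | h'
    · show Function.update (gseq t n m) m (nxt t n (gseq t n m) m) i = _
      rw [Function.update_of_ne (by omega)]
      exact ih i h'
    · have : i = m := by omega
      subst this
      rfl

lemma candW_congr {b b' : ℕ → Fin t} {k : ℕ} (hk : n ≤ k)
    (h : ∀ i < k, b i = b' i) (c : Fin t) : candW t n b k c = candW t n b' k c := by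
  funext j
  unfold candW
  by_cases hj : (j : ℕ) = n - 1
  · simp [hj]
  · have hj2 : (j : ℕ) < n - 1 := by have := j.isLt; omega
    simp only [hj, if_false]
    exact h _ (by omega)

lemma good_congr {b b' : ℕ → Fin t} {k : ℕ} (hk : n ≤ k)
    (h : ∀ i < k, b i = b' i) : good t n b k = good t n b' k := by
  unfold good
  apply Finset.filter_congr
  intro c _
  have hw : ∀ p < k - n + 1, wordAt b n p = wordAt b' n p := by
    intro p hp
    funext j
    exact h _ (by have := j.isLt; omega)
  constructor <;> intro hc p hp <;>
    [rw [← hw p hp, ← candW_congr hk h]; rw [hw p hp, candW_congr hk h]] <;> exact hc p hp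

lemma A_lt {k : ℕ} (h : k < n) : A t n k = 0 := by
  show Function.update (gseq t n k) k (nxt t n (gseq t n k) k) k = 0
  rw [Function.update_self]
  unfold nxt
  simp [h]

lemma A_eq {k : ℕ} (h : n ≤ k) :
    A t n k = if hg : (good t n (A t n) k).Nonempty then (good t n (A t n) k).max' hg else 0 := by
  have h1 : A t n k = nxt t n (gseq t n k) k := by
    show Function.update (gseq t n k) k (nxt t n (gseq t n k) k) k = _
    rw [Function.update_self]
  rw [h1]
  unfold nxt
  rw [if_neg (by omega)]
  congr 1 <;> rw [good_congr h (fun i hi => gseq_stable k i hi)]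

end Greedy

section Greedy2

variable {t n : ℕ} [NeZero t]

lemma window_eq_candW (hn : 1 ≤ n) {q : ℕ} (hq : 1 ≤ q) :
    wordAt (A t n) n q = candW t n (A t n) (q + n - 1) (A t n (q + n - 1)) := by
  funext j
  unfold wordAt candW
  by_cases hj : (j : ℕ) = n - 1
  · rw [if_pos hj, hj]
    congr 1
    omega
  · rw [if_neg hj]
    congr 1
    have := j.isLt
    omega

lemma good_mem {b : ℕ → Fin t} {k : ℕ} {c : Fin t} :
    c ∈ good t n b k ↔ ∀ p < k - n + 1, wordAt b n p ≠ candW t n b k c := by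
  unfold good
  simp

/-- If no position in `[n,k]` is stuck, then all windows starting at `0..k-n+1` are distinct. -/
lemma windows_inj (hn : 1 ≤ n) {k : ℕ}
    (h : ∀ j, n ≤ j → j ≤ k → (good t n (A t n) j).Nonempty) :
    ∀ p q, p ≤ k - n + 1 → q ≤ k - n + 1 → n ≤ k →
      wordAt (A t n) n p = wordAt (A t n) n q → p = q := by
  have key : ∀ p q, q ≤ k - n + 1 → n ≤ k → p < q →
      wordAt (A t n) n p ≠ wordAt (A t n) n q := by
    intro p q hq hk hpq
    have hq1 : 1 ≤ q := by omega
    have hqn : n ≤ q + n - 1 := by omega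
    have hqk : q + n - 1 ≤ k := by omega
    have hA := A_eq (t := t) (n := n) hqn
    rw [dif_pos (h _ hqn hqk)] at hA
    have hmem : A t n (q + n - 1) ∈ good t n (A t n) (q + n - 1) := by
      rw [hA]; exact Finset.max'_mem _ _
    rw [good_mem] at hmem
    have := hmem p (by omega)
    rw [window_eq_candW hn hq1]
    exact this
  intro p q hp hq hk he
  rcases Nat.lt_trichotomy p q with h' | h' | h'
  · exact absurd he (key p q hq hk h')
  · exact h'
  · exact absurd he.symm (key q p hp hk h')

lemma exists_stuck (hn : 1 ≤ n) : ∃ k, n ≤ k ∧ good t n (A t n) k = ∅ := by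
  by_contra hc
  push_neg at hc
  have hne : ∀ j, n ≤ j → (good t n (A t n) j).Nonempty := by
    intro j hj
    exact hc j hj
  have hinj : Function.Injective (fun p => wordAt (A t n) n p) := by
    intro p q he
    exact windows_inj hn (k := p + q + n) (fun j hj _ => hne j hj) p q
      (by omega) (by omega) (by omega) he
  exact Finite.exists_ne_map_eq_of_infinite (fun p => wordAt (A t n) n p)
    |>.elim (fun p hp => hp.elim (fun q ⟨hne', he⟩ => hne' (hinj he)))

/-- The length of the greedy sequence. -/
noncomputable def KK (t n : ℕ) [NeZero t] (hn : 1 ≤ n) : ℕ := Nat.find (exists_stuck (t := t) hn)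

variable (hn : 1 ≤ n)

lemma KK_ge : n ≤ KK t n hn := (Nat.find_spec (exists_stuck (t := t) hn)).1

lemma KK_stuck : good t n (A t n) (KK t n hn) = ∅ := (Nat.find_spec (exists_stuck (t := t) hn)).2

lemma KK_min {j : ℕ} (h1 : n ≤ j) (h2 : j < KK t n hn) : (good t n (A t n) j).Nonempty := by
  have := Nat.find_min (exists_stuck (t := t) hn) h2
  push_neg at this
  exact this h1

/-- windows within the sequence are pairwise distinct -/
lemma inj_windows {p q : ℕ} (hp : p + n ≤ KK t n hn) (hq : q + n ≤ KK t n hn)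
    (he : wordAt (A t n) n p = wordAt (A t n) n q) : p = q := by
  rcases Nat.eq_or_lt_of_le (KK_ge (t:=t) hn) with hK | hK
  · -- KK = n : only position 0
    omega
  · exact windows_inj hn (k := KK t n hn - 1)
      (fun j hj1 hj2 => KK_min hn hj1 (by omega)) p q (by omega) (by omega) (by omega) he

end Greedy2

section Greedy3

variable {t n : ℕ} [NeZero t] (hn : 1 ≤ n)

/-- word with prefix `v` (length `n-1`) and last symbol `c` -/
def ExtW (t n : ℕ) (v : ℕ → Fin t) (c : Fin t) : Fin n → Fin t :=
  fun j => if (j : ℕ) = n - 1 then c else v (j : ℕ)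

/-- word with first symbol `x` and the rest `v` (length `n-1`) -/
def PreW (t n : ℕ) (v : ℕ → Fin t) (x : Fin t) : Fin n → Fin t :=
  fun j => if (j : ℕ) = 0 then x else v ((j : ℕ) - 1)

/-- greedy: a seen extension which is not preferred implies all less-preferred
(larger) extensions were seen, provided the prefix is not all zeros. -/
lemma seen_ext_mono {v : ℕ → Fin t} {c d : Fin t}
    (hv : ∃ j0, j0 < n - 1 ∧ v j0 ≠ 0)
    (hs : Seen (A t n) n (KK t n hn) (ExtW t n v c)) (hcd : c < d) :
    Seen (A t n) n (KK t n hn) (ExtW t n v d) := by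
  obtain ⟨p, hp, hw⟩ := hs
  obtain ⟨j0, hj0, hv0⟩ := hv
  rcases Nat.eq_zero_or_pos p with rfl | hp1
  · exfalso
    apply hv0
    have := congrFun hw ⟨j0, by omega⟩
    unfold wordAt ExtW at this
    rw [if_neg (by simp only [Fin.val_mk]; omega)] at this
    simp only [Fin.val_mk, Nat.zero_add] at this
    rw [← this]
    exact A_lt (by omega)
  · set k := p + n - 1 with hk
    have hkn : n ≤ k := by omega
    have hkK : k < KK t n hn := by omega
    have hgood := KK_min hn hkn hkK
    have hA := A_eq (t := t) (n := n) hkn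
    rw [dif_pos hgood] at hA
    have hwc : wordAt (A t n) n p = candW t n (A t n) k (A t n k) := window_eq_candW hn hp1
    have hlast : A t n k = c := by
      have h1 := congrFun hwc ⟨n - 1, by omega⟩
      have h2 := congrFun hw ⟨n - 1, by omega⟩
      unfold wordAt at h1 h2
      unfold candW at h1
      unfold ExtW at h2
      simp only [Fin.val_mk, if_pos rfl, if_true] at h1 h2
      rw [← h2, h1]
    have hd : d ∉ good t n (A t n) k := by
      intro hd
      have := Finset.le_max' _ d hd
      rw [← hA, hlast] at this
      exact absurd hcd (not_lt.mpr this)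
    rw [good_mem] at hd
    push_neg at hd
    obtain ⟨p', hp', he⟩ := hd
    have hpk : k - n + 1 = p := by omega
    refine ⟨p', by omega, ?_⟩
    rw [he]
    funext j
    unfold candW ExtW
    by_cases hj : (j : ℕ) = n - 1
    · simp [hj]
    · rw [if_neg hj, if_neg hj]
      have hjlt : (j : ℕ) < n - 1 := by have := j.isLt; omega
      have := congrFun hw j
      unfold wordAt ExtW at this
      rw [if_neg hj] at this
      rw [hpk, ← this]

end Greedy3

section Counting

variable {t n : ℕ} [NeZero t] (hn : 1 ≤ n)

lemma stuck_seen (c : Fin t) :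
    ∃ p < KK t n hn - n + 1, wordAt (A t n) n p = candW t n (A t n) (KK t n hn) c := by
  have h : c ∉ good t n (A t n) (KK t n hn) := by
    rw [KK_stuck hn]
    exact Finset.notMem_empty c
  rw [good_mem] at h
  push_neg at h
  exact h

/-- Lemma A: the terminal `(n-1)`-suffix of the greedy sequence is all zeros. -/
lemma terminal_zero : ∀ j, j + 1 < n → A t n (KK t n hn - n + 1 + j) = 0 := by
  classical
  set K := KK t n hn with hK
  have hKn : n ≤ K := KK_ge hn
  -- choice of earlier occurrence for each extension symbol
  have hch : ∀ c : Fin t, ∃ p, p < K - n + 1 ∧ wordAt (A t n) n p = candW t n (A t n) K c := by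
    intro c
    obtain ⟨p, h1, h2⟩ := stuck_seen hn c
    exact ⟨p, h1, h2⟩
  set pc : Fin t → ℕ := fun c => (hch c).choose with hpc
  have hpc1 : ∀ c, pc c < K - n + 1 := fun c => (hch c).choose_spec.1
  have hpc2 : ∀ c, wordAt (A t n) n (pc c) = candW t n (A t n) K c :=
    fun c => (hch c).choose_spec.2
  -- occurrence predicate
  set Occ : ℕ → Prop := fun q => ∀ j, j + 1 < n → A t n (q + j) = A t n (K - n + 1 + j) with hOcc
  have hOccpc : ∀ c, Occ (pc c) := by
    intro c j hj
    have := congrFun (hpc2 c) ⟨j, by omega⟩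
    unfold wordAt candW at this
    simp only [Fin.val_mk] at this
    rw [if_neg (by omega)] at this
    exact this
  have hlastpc : ∀ c, A t n (pc c + (n - 1)) = c := by
    intro c
    have := congrFun (hpc2 c) ⟨n - 1, by omega⟩
    unfold wordAt candW at this
    simp only [Fin.val_mk, if_pos rfl, if_true] at this
    exact this
  have hpcinj : Function.Injective pc := by
    intro c c' h
    rw [← hlastpc c, ← hlastpc c', h]
  -- occurrences at positions ≥ 1 inject into Fin t via the preceding symbol
  have hinj : ∀ q q', Occ q → Occ q' → 1 ≤ q → q ≤ K - n + 1 → 1 ≤ q' → q' ≤ K - n + 1 →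
      A t n (q - 1) = A t n (q' - 1) → q = q' := by
    intro q q' hq hq' h1 h2 h1' h2' he
    have hw : ∀ r, Occ r → 1 ≤ r → wordAt (A t n) n (r - 1) =
        fun j : Fin n => if (j : ℕ) = 0 then A t n (r - 1) else A t n (K - n + 1 + ((j:ℕ) - 1)) := by
      intro r hr h1r
      funext j
      unfold wordAt
      by_cases hj : (j : ℕ) = 0
      · simp [hj]
      · rw [if_neg hj]
        have : r - 1 + (j : ℕ) = r + ((j : ℕ) - 1) := by omega
        rw [this]
        exact hr _ (by have := j.isLt; omega)
    have : wordAt (A t n) n (q - 1) = wordAt (A t n) n (q' - 1) := by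
      rw [hw q hq h1, hw q' hq' h1', he]
    have := inj_windows hn (by omega) (by omega) this
    omega
  -- the map q ↦ A (q-1) on the t+1 occurrences forces an occurrence at 0
  have h0 : ∃ c, pc c = 0 := by
    by_contra hno
    push_neg at hno
    set T : Finset ℕ := insert (K - n + 1) (Finset.image pc Finset.univ) with hT
    have hcard : T.card = t + 1 := by
      rw [hT, Finset.card_insert_of_notMem, Finset.card_image_of_injective _ hpcinj,
        Finset.card_univ, Fintype.card_fin]
      intro hmem
      obtain ⟨c, _, hc⟩ := Finset.mem_image.mp hmem
      have := hpc1 c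
      omega
    have hle : T.card ≤ t := by
      have := Finset.card_le_card_of_injOn (fun q => A t n (q - 1))
        (fun q _ => Finset.mem_univ _) (s := T) ?_
      · simpa using this
      · intro q hq q' hq' he
        have hprop : ∀ r ∈ T, Occ r ∧ 1 ≤ r ∧ r ≤ K - n + 1 := by
          intro r hr
          rw [hT, Finset.mem_insert] at hr
          rcases hr with rfl | hr
          · exact ⟨fun j hj => rfl, by omega, le_refl _⟩
          · obtain ⟨c, _, rfl⟩ := Finset.mem_image.mp hr
            refine ⟨hOccpc c, ?_, by have := hpc1 c; omega⟩
            have := hno c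
            omega
        obtain ⟨o1, o2, o3⟩ := hprop q hq
        obtain ⟨o1', o2', o3'⟩ := hprop q' hq'
        exact hinj q q' o1 o1' o2 o3 o2' o3' he
    omega
  obtain ⟨c, hc⟩ := h0
  intro j hj
  have := hOccpc c j hj
  rw [hc, Nat.zero_add] at this
  rw [← this]
  exact A_lt (by omega)

end Counting

section FG

open scoped Classical

variable {t n : ℕ} [NeZero t] (hn : 1 ≤ n)

/-- occurrences of the `(n-1)`-word `v` as a factor of the greedy sequence -/
noncomputable def QQ (t n : ℕ) [NeZero t] (hn : 1 ≤ n) (v : ℕ → Fin t) : Finset ℕ :=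
  have := Classical.propDecidable
  (Finset.range (KK t n hn - n + 2)).filter (fun q => ∀ j, j + 1 < n → A t n (q + j) = v j)

lemma mem_QQ {v : ℕ → Fin t} {q : ℕ} :
    q ∈ QQ t n hn v ↔ q < KK t n hn - n + 2 ∧ ∀ j, j + 1 < n → A t n (q + j) = v j := by
  unfold QQ
  simp [Finset.mem_filter]

lemma zero_mem_QQ_iff {v : ℕ → Fin t} :
    0 ∈ QQ t n hn v ↔ ∀ j, j + 1 < n → v j = 0 := by
  rw [mem_QQ hn]
  constructor
  · intro ⟨_, h⟩ j hj
    rw [← h j hj, Nat.zero_add]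
    exact A_lt (by omega)
  · intro h
    refine ⟨by omega, fun j hj => ?_⟩
    rw [Nat.zero_add, h j hj]
    exact A_lt (by omega)

lemma top_mem_QQ_iff {v : ℕ → Fin t} :
    (KK t n hn - n + 1) ∈ QQ t n hn v ↔ ∀ j, j + 1 < n → v j = 0 := by
  rw [mem_QQ hn]
  constructor
  · intro ⟨_, h⟩ j hj
    rw [← h j hj]
    exact terminal_zero hn j hj
  · intro h
    refine ⟨by omega, fun j hj => ?_⟩
    rw [h j hj]
    exact terminal_zero hn j hj

lemma card_ext_eq_card_pre (v : ℕ → Fin t) :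
    (Finset.univ.filter (fun c => Seen (A t n) n (KK t n hn) (ExtW t n v c))).card =
    (Finset.univ.filter (fun x => Seen (A t n) n (KK t n hn) (PreW t n v x))).card := by
  classical
  set K := KK t n hn with hK
  have hKn : n ≤ K := KK_ge hn
  set Q := QQ t n hn v with hQ
  -- seen extensions = image of Q.erase (K-n+1) under q ↦ A (q+n-1)
  have hSf : Finset.univ.filter (fun c => Seen (A t n) n K (ExtW t n v c)) =
      (Q.erase (K - n + 1)).image (fun q => A t n (q + n - 1)) := by
    ext c
    simp only [Finset.mem_filter, Finset.mem_univ, true_and, Finset.mem_image,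
      Finset.mem_erase]
    constructor
    · rintro ⟨p, hp, hw⟩
      refine ⟨p, ⟨by omega, (mem_QQ hn).mpr ⟨by omega, fun j hj => ?_⟩⟩, ?_⟩
      · have := congrFun hw ⟨j, by omega⟩
        unfold wordAt ExtW at this
        simp only [Fin.val_mk] at this
        rwa [if_neg (by omega)] at this
      · have := congrFun hw ⟨n - 1, by omega⟩
        unfold wordAt ExtW at this
        simp only [Fin.val_mk, if_pos rfl, if_true] at this
        rw [← this]
        congr 1
        omega
    · rintro ⟨q, ⟨hqne, hq⟩, rfl⟩
      rw [mem_QQ hn] at hq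
      refine ⟨q, by omega, ?_⟩
      funext j
      unfold wordAt ExtW
      by_cases hj : (j : ℕ) = n - 1
      · rw [if_pos hj, hj]
        congr 1
        omega
      · rw [if_neg hj]
        exact hq.2 _ (by have := j.isLt; omega)
  -- seen predecessors = image of Q.erase 0 under q ↦ A (q-1)
  have hSg : Finset.univ.filter (fun x => Seen (A t n) n K (PreW t n v x)) =
      (Q.erase 0).image (fun q => A t n (q - 1)) := by
    ext x
    simp only [Finset.mem_filter, Finset.mem_univ, true_and, Finset.mem_image,
      Finset.mem_erase]
    constructor
    · rintro ⟨p, hp, hw⟩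
      refine ⟨p + 1, ⟨by omega, (mem_QQ hn).mpr ⟨by omega, fun j hj => ?_⟩⟩, ?_⟩
      · have := congrFun hw ⟨j + 1, by omega⟩
        unfold wordAt PreW at this
        simp only [Fin.val_mk] at this
        rw [if_neg (by omega)] at this
        simp only [Nat.add_sub_cancel] at this
        have h2 : p + 1 + j = p + (j + 1) := by omega
        rw [h2, this]
      · have := congrFun hw ⟨0, by omega⟩
        unfold wordAt PreW at this
        simp only [Fin.val_mk, if_pos rfl, if_true] at this
        have h2 : p + 1 - 1 = p + 0 := by omega
        rw [h2, this]
    · rintro ⟨q, ⟨hqne, hq⟩, rfl⟩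
      rw [mem_QQ hn] at hq
      refine ⟨q - 1, by omega, ?_⟩
      funext j
      unfold wordAt PreW
      by_cases hj : (j : ℕ) = 0
      · rw [if_pos hj, hj, Nat.add_zero]
      · rw [if_neg hj]
        have : q - 1 + (j : ℕ) = q + ((j : ℕ) - 1) := by omega
        rw [this]
        exact hq.2 _ (by have := j.isLt; omega)
  -- both images are injective
  have hQb : ∀ q ∈ Q, q ≤ K - n + 1 := by
    intro q hq
    rw [hQ, mem_QQ hn] at hq
    omega
  have hQocc : ∀ q ∈ Q, ∀ j, j + 1 < n → A t n (q + j) = v j := by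
    intro q hq
    rw [hQ, mem_QQ hn] at hq
    exact hq.2
  have hfInj : Set.InjOn (fun q => A t n (q + n - 1)) (Q.erase (K - n + 1)) := by
    intro q hq q' hq' he
    rw [Finset.coe_erase, Set.mem_diff] at hq hq'
    have hq1 := hQb q hq.1
    have hq1' := hQb q' hq'.1
    have hqle : q ≤ K - n := by
      rcases Nat.lt_or_ge q (K - n + 1) with h | h
      · omega
      · exfalso; exact hq.2 (by simp; omega)
    have hqle' : q' ≤ K - n := by
      rcases Nat.lt_or_ge q' (K - n + 1) with h | h
      · omega
      · exfalso; exact hq'.2 (by simp; omega)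
    have hw : ∀ r, r ∈ Q → r ≤ K - n → wordAt (A t n) n r =
        ExtW t n v (A t n (r + n - 1)) := by
      intro r hr hrle
      funext j
      unfold wordAt ExtW
      by_cases hj : (j : ℕ) = n - 1
      · rw [if_pos hj, hj]
        congr 1
        omega
      · rw [if_neg hj]
        exact hQocc r hr _ (by have := j.isLt; omega)
    have he' : A t n (q + n - 1) = A t n (q' + n - 1) := he
    apply inj_windows (t := t) hn (by omega) (by omega)
    rw [hw q hq.1 hqle, hw q' hq'.1 hqle', he']
  have hgInj : Set.InjOn (fun q => A t n (q - 1)) (Q.erase 0) := by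
    intro q hq q' hq' he
    rw [Finset.coe_erase, Set.mem_diff] at hq hq'
    have hq1 := hQb q hq.1
    have hq1' := hQb q' hq'.1
    have hqge : 1 ≤ q := by
      rcases Nat.eq_zero_or_pos q with h | h
      · exfalso; exact hq.2 (by simp [h])
      · omega
    have hqge' : 1 ≤ q' := by
      rcases Nat.eq_zero_or_pos q' with h | h
      · exfalso; exact hq'.2 (by simp [h])
      · omega
    have hw : ∀ r, r ∈ Q → 1 ≤ r → wordAt (A t n) n (r - 1) =
        PreW t n v (A t n (r - 1)) := by
      intro r hr hrge
      funext j
      unfold wordAt PreW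
      by_cases hj : (j : ℕ) = 0
      · rw [if_pos hj, hj]
        simp
      · rw [if_neg hj]
        have : r - 1 + (j : ℕ) = r + ((j : ℕ) - 1) := by omega
        rw [this]
        exact hQocc r hr _ (by have := j.isLt; omega)
    have : q - 1 = q' - 1 := by
      have he' : A t n (q - 1) = A t n (q' - 1) := he
      apply inj_windows (t := t) hn (by omega) (by omega)
      rw [hw q hq.1 hqge, hw q' hq'.1 hqge', he']
    omega
  rw [hSf, hSg, Finset.card_image_of_injOn hfInj, Finset.card_image_of_injOn hgInj]
  -- the endpoints are simultaneously in or out of Q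
  have hiff : 0 ∈ Q ↔ (K - n + 1) ∈ Q := by
    rw [hQ, zero_mem_QQ_iff hn, top_mem_QQ_iff hn]
  by_cases h0 : 0 ∈ Q
  · rw [Finset.card_erase_of_mem (hiff.mp h0), Finset.card_erase_of_mem h0]
  · rw [Finset.erase_eq_of_notMem (fun h => h0 (hiff.mpr h)),
      Finset.erase_eq_of_notMem h0]

end FG

section Fullness

open scoped Classical

variable {t n : ℕ} [NeZero t] (hn : 1 ≤ n)

lemma zero_prefix_full {v : ℕ → Fin t} (hv : ∀ j, j + 1 < n → v j = 0) (c : Fin t) :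
    Seen (A t n) n (KK t n hn) (ExtW t n v c) := by
  obtain ⟨p, hp, hw⟩ := stuck_seen hn c
  refine ⟨p, by have := KK_ge (t := t) hn; omega, ?_⟩
  rw [hw]
  funext j
  unfold candW ExtW
  by_cases hj : (j : ℕ) = n - 1
  · rw [if_pos hj, if_pos hj]
  · rw [if_neg hj, if_neg hj]
    have hjlt : (j : ℕ) + 1 < n := by have := j.isLt; omega
    rw [terminal_zero hn _ hjlt, hv _ hjlt]

lemma seen_all (w : Fin n → Fin t) : Seen (A t n) n (KK t n hn) w := by
  by_contra hw0
  -- we produce missing words with ever more trailing zeros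
  have main : ∀ k : ℕ, ∃ w' : Fin n → Fin t, ¬ Seen (A t n) n (KK t n hn) w' ∧
      ∀ j : Fin n, n ≤ (j : ℕ) + k → w' j = 0 := by
    intro k
    induction k with
    | zero => exact ⟨w, hw0, fun j hj => absurd j.isLt (by omega)⟩
    | succ k ih =>
      obtain ⟨w, hw, hz⟩ := ih
      set v : ℕ → Fin t := fun i => if h : i + 1 < n then w ⟨i + 1, by omega⟩ else 0 with hv
      have hwP : w = PreW t n v (w ⟨0, by omega⟩) := by
        funext j
        unfold PreW
        by_cases hj : (j : ℕ) = 0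
        · rw [if_pos hj]
          congr 1
          exact Fin.ext (by simp [hj])
        · rw [if_neg hj, hv]
          simp only
          rw [dif_pos (by have := j.isLt; omega)]
          congr 1
          exact Fin.ext (by simp; have := j.isLt; omega)
      -- some extension of v is missing
      have hcardg : (Finset.univ.filter
          (fun x => Seen (A t n) n (KK t n hn) (PreW t n v x))).card < t := by
        have hne : (Finset.univ.filter
            (fun x => Seen (A t n) n (KK t n hn) (PreW t n v x))) ≠ Finset.univ := by
          intro hEq
          apply hw
          rw [hwP]
          have := Finset.mem_filter.mp (hEq ▸ Finset.mem_univ (w ⟨0, by omega⟩))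
          exact this.2
        calc (Finset.univ.filter _).card
            < Finset.univ.card := Finset.card_lt_card (Finset.ssubset_univ_iff.mpr hne)
          _ = t := by simp
      have hcardf := (card_ext_eq_card_pre hn v) ▸ hcardg
      have hmiss : ∃ c, ¬ Seen (A t n) n (KK t n hn) (ExtW t n v c) := by
        by_contra hall
        push_neg at hall
        have : (Finset.univ.filter
            (fun c => Seen (A t n) n (KK t n hn) (ExtW t n v c))) = Finset.univ := by
          apply Finset.eq_univ_of_forall
          intro c
          exact Finset.mem_filter.mpr ⟨Finset.mem_univ c, hall c⟩
        rw [this] at hcardf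
        simp at hcardf
      by_cases hvz : ∀ j, j + 1 < n → v j = 0
      · exact absurd (zero_prefix_full hn hvz hmiss.choose) hmiss.choose_spec
      · push_neg at hvz
        obtain ⟨j0, hj0, hvj0⟩ := hvz
        have hmiss0 : ¬ Seen (A t n) n (KK t n hn) (ExtW t n v 0) := by
          intro h0
          obtain ⟨c, hc⟩ := hmiss
          apply hc
          rcases Nat.eq_zero_or_pos (c : ℕ) with hc0 | hc0
          · have : c = 0 := Fin.ext hc0
            rwa [this]
          · exact seen_ext_mono hn ⟨j0, by omega, hvj0⟩ h0 (by exact Fin.lt_def.mpr hc0)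
        refine ⟨ExtW t n v 0, hmiss0, fun j hj => ?_⟩
        unfold ExtW
        by_cases hjn : (j : ℕ) = n - 1
        · rw [if_pos hjn]
        · rw [if_neg hjn, hv]
          have hjlt : (j : ℕ) + 1 < n := by have := j.isLt; omega
          simp only
          rw [dif_pos hjlt]
          apply hz
          simp
          omega
  obtain ⟨w', hw', hz'⟩ := main n
  apply hw'
  refine ⟨0, by have := KK_ge (t := t) hn; omega, ?_⟩
  funext j
  unfold wordAt
  rw [Nat.zero_add, hz' j (by omega)]
  exact A_lt j.isLt

/-- the greedy sequence has length exactly `t^n + n - 1` -/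
lemma KK_card (hn : 1 ≤ n) : KK t n hn + 1 = t ^ n + n := by
  classical
  have hKn : n ≤ KK t n hn := KK_ge hn
  have himg : (Finset.range (KK t n hn - n + 1)).image (fun p => wordAt (A t n) n p)
      = Finset.univ := by
    apply Finset.eq_univ_of_forall
    intro w
    obtain ⟨p, hp, hw⟩ := seen_all hn w
    exact Finset.mem_image.mpr ⟨p, Finset.mem_range.mpr (by omega), hw⟩
  have hinj : Set.InjOn (fun p => wordAt (A t n) n p)
      (Finset.range (KK t n hn - n + 1)) := by
    intro p hp q hq he
    simp only [Finset.coe_range, Set.mem_Iio] at hp hq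
    exact inj_windows hn (by omega) (by omega) he
  have := Finset.card_image_of_injOn hinj
  rw [himg, Finset.card_univ, Finset.card_range] at this
  have hcard : Fintype.card (Fin n → Fin t) = t ^ n := by
    rw [Fintype.card_fun, Fintype.card_fin, Fintype.card_fin]
  omega

end Fullness


/-- For any alphabet of size `t ≥ 2` and any `n ≥ 1`, there exists a
cyclic sequence of length `t^n` in which every word of length `n` appears exactly
once as a block of contiguous symbols. -/
theorem statement_0 (t n : ℕ) (ht : 2 ≤ t) (hn : 1 ≤ n) :
    ∃ f : ℕ → Fin t, (∀ i, f (i + t ^ n) = f i) ∧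
      ∀ w : Fin n → Fin t, ∃! i, i < t ^ n ∧ ∀ j : Fin n, f (i + (j : ℕ)) = w j := by
  haveI : NeZero t := ⟨by omega⟩
  set K := KK t n hn with hK
  have hKn : n ≤ K := KK_ge hn
  have hKc : K + 1 = t ^ n + n := KK_card hn
  set N := t ^ n with hN
  have hnN : n ≤ N := le_trans (Nat.le_of_lt (Nat.lt_two_pow_self (n := n)))
    (Nat.pow_le_pow_left ht n)
  have hN0 : 0 < N := by omega
  have hKN : K - n + 1 = N := by omega
  refine ⟨fun i => A t n (i % N), fun i => by simp [Nat.add_mod_right], ?_⟩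
  -- cyclic windows at `i < N` coincide with linear windows of the greedy sequence
  have hwin : ∀ i < N, ∀ j : Fin n, A t n ((i + (j : ℕ)) % N) = A t n (i + (j : ℕ)) := by
    intro i hi j
    have hj := j.isLt
    rcases Nat.lt_or_ge (i + (j : ℕ)) N with h | h
    · rw [Nat.mod_eq_of_lt h]
    · have h2 : i + (j : ℕ) - N < n - 1 := by omega
      have hmod : (i + (j : ℕ)) % N = i + (j : ℕ) - N := by
        rw [Nat.mod_eq_sub_mod h, Nat.mod_eq_of_lt (by omega)]
      rw [hmod, A_lt (by omega)]
      have := terminal_zero (t := t) hn (i + (j : ℕ) - N) (by omega)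
      rw [hKN] at this
      rw [show i + (j : ℕ) = N + (i + (j : ℕ) - N) by omega, this]
  intro w
  obtain ⟨p, hp, hw⟩ := seen_all hn w
  have hpN : p < N := by omega
  refine ⟨p, ⟨hpN, fun j => ?_⟩, ?_⟩
  · show A t n ((p + (j : ℕ)) % N) = w j
    rw [hwin p hpN j]
    exact congrFun hw j
  · rintro i ⟨hi, hwi⟩
    apply inj_windows (t := t) hn (by omega) (by omega)
    rw [hw]
    funext j
    unfold wordAt
    rw [← hwin i hi j]
    exact hwi j

end DeBruijnPaper
end

section
/- Under the hypotheses of Theorem (main converse), the sequence S produced by Algorithm P terminates immediately after an occurrence of a word of the form a·0^{n-1} for some nonzero symbol a. -/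
namespace DeBruijnPaper

/-- Under the hypotheses of the main converse theorem, the sequence
produced by Algorithm P terminates just after an occurrence of a word `a·0^{n-1}`
with `a ≠ 0`: its last `n` symbols are a nonzero symbol followed by `n-1` zeros. -/
theorem statement_6 (t s n : ℕ) [NeZero t] (ht : 2 ≤ t) (hs : 2 ≤ s) (hn : s ≤ n)
    (P : (Fin (s - 1) → Fin t) → Fin t → Fin t) (hP : IsPrefFun t (s - 1) P)
    (hg : OnlyZeroCycle (leastPF (show 0 < t by omega) P))
    (a : ℕ → Fin t) (L : ℕ) (hGen : GenSeqFrom t (s - 1) n (zeroWord t n) P a L) :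
    ((a (L - n) : ℕ) ≠ 0) ∧ ∀ k, L - n < k → k < L → (a k : ℕ) = 0 := by
  obtain ⟨hlen, hinit, hinj, _, hmax⟩ := hGen
  have hn2 : 2 ≤ n := le_trans hs hn
  set q : ℕ := L - (n - 1) with hq
  choose p hpL hpw using hmax
  have prefA : ∀ (c : Fin t) (j : ℕ), j < n - 1 → a (p c + j) = a (q + j) := by
    intro c j hj
    have h := congrFun (hpw c) ⟨j, by omega⟩
    simp only [wordAt, cand] at h
    rw [h, if_neg (by omega)]
  have lastA : ∀ c : Fin t, a (p c + (n - 1)) = c := by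
    intro c
    have h := congrFun (hpw c) ⟨n - 1, by omega⟩
    simp only [wordAt, cand] at h
    rw [h, if_pos (by omega)]
  have wordB : ∀ pp : ℕ, 1 ≤ pp → pp + n ≤ L + 1 →
      (∀ j, j < n - 1 → a (pp + j) = a (q + j)) →
      wordAt a n (pp - 1) = fun j : Fin n =>
        if (j : ℕ) = 0 then a (pp - 1) else a (q + ((j : ℕ) - 1)) := by
    intro pp hpp _ hpre
    funext j
    simp only [wordAt]
    by_cases hj : (j : ℕ) = 0
    · rw [if_pos hj, hj, Nat.add_zero]
    · rw [if_neg hj]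
      have h1 : pp - 1 + (j : ℕ) = pp + ((j : ℕ) - 1) := by omega
      rw [h1]
      exact hpre _ (by have := j.isLt; omega)
  have key : ∀ pp pp', 1 ≤ pp → pp + n ≤ L + 1 →
      (∀ j, j < n - 1 → a (pp + j) = a (q + j)) →
      1 ≤ pp' → pp' + n ≤ L + 1 → (∀ j, j < n - 1 → a (pp' + j) = a (q + j)) →
      a (pp - 1) = a (pp' - 1) → pp = pp' := by
    intro pp pp' h1 h2 h3 h1' h2' h3' heq
    have e1 := wordB pp h1 h2 h3
    have e2 := wordB pp' h1' h2' h3'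
    have hW : wordAt a n (pp - 1) = wordAt a n (pp' - 1) := by
      rw [e1, e2]
      funext j
      by_cases hj : (j : ℕ) = 0 <;> simp [hj, heq]
    have := hinj _ _ (by omega) (by omega) hW
    omega
  have hex : ∃ c : Fin t, p c = 0 := by
    by_contra hno
    push_neg at hno
    have hGinj : Function.Injective
        (fun o : Option (Fin t) => match o with
          | none => a (q - 1)
          | some c => a (p c - 1)) := by
      intro o o' heq
      match o, o' with
      | none, none => rfl
      | none, some c =>
        exfalso
        have hk := key q (p c) (by omega) (by omega) (fun j hj => rfl)
          (by have := hno c; omega) (by have := hpL c; omega) (prefA c) heq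
        have := hpL c; omega
      | some c, none =>
        exfalso
        have hk := key (p c) q (by have := hno c; omega) (by have := hpL c; omega)
          (prefA c) (by omega) (by omega) (fun j hj => rfl) heq
        have := hpL c; omega
      | some c, some c' =>
        have hpe := key (p c) (p c') (by have := hno c; omega) (by have := hpL c; omega)
          (prefA c) (by have := hno c'; omega) (by have := hpL c'; omega) (prefA c') heq
        have h1 := lastA c
        have h2 := lastA c'
        rw [hpe] at h1
        exact congrArg some (h1.symm.trans h2)
    have hcard := Fintype.card_le_of_injective _ hGinj
    simp [Fintype.card_option] at hcard
  obtain ⟨c0, hc0⟩ := hex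
  have zeros : ∀ j, j < n - 1 → a (q + j) = 0 := by
    intro j hj
    have h1 := prefA c0 j hj
    rw [hc0] at h1
    have h2 := hinit ⟨j, by omega⟩
    simp [zeroWord] at h2
    rw [← h1]
    simpa using h2
  have main2 : ∀ k, L - n < k → k < L → a k = 0 := by
    intro k hk1 hk2
    have hk : k = q + (k - q) := by omega
    rw [hk]
    exact zeros _ (by omega)
  have main1 : a (L - n) ≠ 0 := by
    intro h0
    have hzero0 : wordAt a n 0 = zeroWord t n := by
      funext j
      simp only [wordAt, Nat.zero_add, zeroWord]
      have := hinit j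
      simpa [zeroWord] using this
    have hzeroL : wordAt a n (L - n) = zeroWord t n := by
      funext j
      simp only [wordAt, zeroWord]
      rcases Nat.eq_zero_or_pos (j : ℕ) with hj | hj
      · rw [hj]; simpa using h0
      · exact main2 _ (by omega) (by have := j.isLt; omega)
    have hLn := hinj 0 (L - n) (by omega) (by omega) (hzero0.trans hzeroL.symm)
    have hp1L := hpL ⟨1, by omega⟩
    have hp0 : p ⟨1, by omega⟩ = 0 := by omega
    have hl := lastA ⟨1, by omega⟩
    rw [hp0, Nat.zero_add] at hl
    have hz : a (n - 1) = 0 := by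
      have := hinit ⟨n - 1, by omega⟩
      simpa [zeroWord] using this
    rw [hz] at hl
    have := congrArg Fin.val hl
    simp at this
  constructor
  · intro h
    exact main1 (by
      apply Fin.ext
      simpa using h)
  · intro k h1 h2
    rw [main2 k h1 h2]
    simp
end DeBruijnPaper
end

section
/- Every de Bruijn sequence of order n over an alphabet of size t started at the all-zero word is generated by at least one preference function of span n-1; consequently, the preference function complexity comp_0(S) of such a sequence S is well-defined and satisfies 0 ≤ comp_0(S) ≤ n-1. -/
namespace DeBruijnPaper

/-- Every de Bruijn sequence of order `n` started at `0^n` is generated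
by at least one preference function of span `n-1`; hence the preference function
complexity (the least span of a generating preference function) is well-defined and
at most `n-1`. -/
theorem statement_11 (t n : ℕ) [NeZero t] (ht : 2 ≤ t) (hn : 1 ≤ n)
    (a : ℕ → Fin t) (hinit : ∀ i, i < n → (a i : ℕ) = 0)
    (hdb : ∀ w : Fin n → Fin t, ∃! p, p + n ≤ t ^ n + n - 1 ∧ wordAt a n p = w) :
    (∃ P : (Fin (n - 1) → Fin t) → Fin t → Fin t,
      IsPrefFun t (n - 1) P ∧ GenSeqFrom t (n - 1) n (zeroWord t n) P a (t ^ n + n - 1)) ∧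
    sInf {s : ℕ | ∃ P : (Fin s → Fin t) → Fin t → Fin t,
      IsPrefFun t s P ∧ GenSeqFrom t s n (zeroWord t n) P a (t ^ n + n - 1)} ≤ n - 1 := by
  classical
  have htpos : 0 < t := by omega
  set L := t ^ n + n - 1 with hL
  have hpow : 1 ≤ t ^ n := Nat.one_le_pow _ _ htpos
  have hLn : n ≤ L := by omega
  -- append an (n-1)-word with a symbol to get an n-word
  let app : (Fin (n - 1) → Fin t) → Fin t → (Fin n → Fin t) :=
    fun w c j => if h : (j : ℕ) < n - 1 then w ⟨j, h⟩ else c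
  -- position where each n-word occurs
  let pos : (Fin (n - 1) → Fin t) → Fin t → ℕ :=
    fun w c => (hdb (app w c)).exists.choose
  have pos_spec : ∀ w c, pos w c + n ≤ L ∧ wordAt a n (pos w c) = app w c :=
    fun w c => (hdb (app w c)).exists.choose_spec
  have pos_uniq : ∀ w c p, p + n ≤ L → wordAt a n p = app w c → p = pos w c := by
    intro w c p h1 h2
    exact (hdb (app w c)).unique ⟨h1, h2⟩ (pos_spec w c)
  have posInj : ∀ w, Function.Injective (pos w) := by
    intro w c c' h
    have h1 := (pos_spec w c).2
    have h2 := (pos_spec w c').2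
    rw [h, h2] at h1
    have := congrFun h1 ⟨n - 1, by omega⟩
    simpa [app] using this.symm
  let σ : (Fin (n - 1) → Fin t) → Equiv.Perm (Fin t) := fun w => Tuple.sort (pos w)
  have hsm : ∀ w, StrictMono (pos w ∘ σ w) := fun w =>
    (Tuple.monotone_sort (pos w)).strictMono_of_injective
      ((posInj w).comp (σ w).injective)
  let P : (Fin (n - 1) → Fin t) → Fin t → Fin t := fun w => ⇑(σ w)
  -- candidate words are appended words
  have cand_eq : ∀ k c, n - 1 ≤ k →
      cand a n k c = app (wordAt a (n - 1) (k - (n - 1))) c := by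
    intro k c hk
    funext j
    have hj : (j : ℕ) < n := j.isLt
    by_cases h : (j : ℕ) + 1 = n
    · have h2 : ¬ ((j : ℕ) < n - 1) := by omega
      simp [cand, app, h, h2]
    · have h2 : (j : ℕ) < n - 1 := by omega
      simp [cand, app, wordAt, h, h2]
  have hGen : GenSeqFrom t (n - 1) n (zeroWord t n) P a L := by
    constructor
    · exact hLn
    · intro j
      have := hinit j j.isLt
      exact Fin.ext (by simpa [zeroWord] using this)
    · intro i j hi hj hij
      exact (hdb (wordAt a n i)).unique ⟨hi, rfl⟩ ⟨hj, hij.symm⟩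
    · intro k hk hkL
      set w := wordAt a (n - 1) (k - (n - 1)) with hw
      have hak : wordAt a n (k - (n - 1)) = app w (a k) := by
        funext j
        have hj : (j : ℕ) < n := j.isLt
        by_cases h : (j : ℕ) < n - 1
        · simp [app, wordAt, h, hw]
        · have hjn : (j : ℕ) = n - 1 := by omega
          have : k - (n - 1) + (j : ℕ) = k := by omega
          simp [app, wordAt, h, this]
      have hp : pos w (a k) = k - (n - 1) :=
        (pos_uniq w (a k) _ (by omega) hak).symm
      refine ⟨(σ w).symm (a k), ?_, ?_⟩
      · simp [P]
      · intro j hj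
        have hlt : pos w (σ w j) < pos w (σ w ((σ w).symm (a k))) := hsm w hj
        rw [Equiv.apply_symm_apply, hp] at hlt
        refine ⟨pos w (σ w j), by omega, ?_⟩
        rw [(pos_spec w _).2, cand_eq k _ (by omega)]
    · intro c
      obtain ⟨p, hp1, hp2⟩ := (hdb (app (wordAt a (n - 1) (L - (n - 1))) c)).exists
      exact ⟨p, hp1, by rw [hp2, cand_eq L c (by omega)]⟩
  have hmem : (n - 1) ∈ {s : ℕ | ∃ P : (Fin s → Fin t) → Fin t → Fin t,
      IsPrefFun t s P ∧ GenSeqFrom t s n (zeroWord t n) P a (t ^ n + n - 1)} :=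
    ⟨P, fun w => (σ w).bijective, hGen⟩
  exact ⟨⟨P, fun w => (σ w).bijective, hGen⟩, Nat.sInf_le hmem⟩
end DeBruijnPaper
end

section
/- Every de Bruijn sequence of preference function complexity zero is equivalent, up to applying a permutation of the alphabet to each symbol, to the Ford (prefer-higher) sequence of the same order. -/
namespace DeBruijnPaper

-- length lemma
lemma length_eq {t n : ℕ} (hn : 1 ≤ n) {a : ℕ → Fin t} {L : ℕ}
    (hlen : n ≤ L)
    (hinj : ∀ i j, i + n ≤ L → j + n ≤ L → wordAt a n i = wordAt a n j → i = j)
    (hFull : Full t n a L) : L = t ^ n + n - 1 := by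
  have hb : Function.Bijective (fun q : Fin (L - n + 1) => wordAt a n q) := by
    constructor
    · intro q q' h
      have := hinj q q' (by omega) (by omega) h
      exact Fin.ext this
    · intro w
      obtain ⟨p, hp, hw⟩ := hFull w
      exact ⟨⟨p, by omega⟩, hw⟩
  have hcard := Fintype.card_of_bijective hb
  simp [Fintype.card_fin, Fintype.card_fun] at hcard
  omega

-- newness lemma
lemma cand_self {t n : ℕ} (a : ℕ → Fin t) {k : ℕ} (hk : n ≤ k) :
    cand a n k (a k) = wordAt a n (k - n + 1) := by
  funext j
  unfold cand wordAt
  by_cases h : (j : ℕ) + 1 = n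
  · have : k - n + 1 + (j : ℕ) = k := by omega
    simp [h, this]
  · have hj := j.isLt
    have : k - (n - 1) + (j : ℕ) = k - n + 1 + (j : ℕ) := by omega
    simp [h, this]

lemma not_seen_self {t m n : ℕ} {I P a L} (hG : GenSeqFrom t m n I P a L)
    {k : ℕ} (hkn : n ≤ k) (hkL : k < L) : ¬ Seen a n k (cand a n k (a k)) := by
  rintro ⟨p, hp, hw⟩
  rw [cand_self a hkn] at hw
  have := hG.inj p (k - n + 1) (by omega) (by omega) hw
  omega


lemma simulate {t n : ℕ} [NeZero t] (hn : 1 ≤ n)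
    {P P' : (Fin 0 → Fin t) → Fin t → Fin t}
    {a b : ℕ → Fin t} {L : ℕ}
    (ha : GenSeqFrom t 0 n (zeroWord t n) P a L)
    (hb : GenSeqFrom t 0 n (zeroWord t n) P' b L)
    (σ : Equiv.Perm (Fin t)) (hσ0 : σ 0 = 0)
    (hσ : ∀ w i, σ (P' w i) = P w i) :
    ∀ k, k < L → a k = σ (b k) := by
  intro k
  induction k using Nat.strong_induction_on with
  | _ k IH =>
  intro hkL
  by_cases hkn : k < n
  · rw [ha.init ⟨k, hkn⟩, hb.init ⟨k, hkn⟩]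
    simp [zeroWord, hσ0]
  push_neg at hkn
  -- words agree up to k
  have hword : ∀ q, q + n ≤ k → wordAt a n q = σ ∘ wordAt b n q := by
    intro q hq
    funext j
    have hj := j.isLt
    exact IH (q + (j : ℕ)) (by omega) (by omega)
  have hseen : ∀ w, Seen a n k w ↔ Seen b n k (σ.symm ∘ w) := by
    intro w
    constructor
    · rintro ⟨p, hp, hw⟩
      refine ⟨p, hp, ?_⟩
      rw [hword p hp] at hw
      funext j
      have := congrFun hw j
      simp [Function.comp] at this ⊢
      rw [← this]; simp
    · rintro ⟨p, hp, hw⟩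
      refine ⟨p, hp, ?_⟩
      rw [hword p hp]
      funext j
      have := congrFun hw j
      simp [Function.comp] at this ⊢
      rw [this]; simp
  have hcand : ∀ c : Fin t, cand a n k c = σ ∘ cand b n k (σ.symm c) := by
    intro c
    funext j
    have hj := j.isLt
    by_cases h : (j : ℕ) + 1 = n
    · simp [cand, h, Function.comp]
    · have h1 : k - (n - 1) + (j : ℕ) < k := by omega
      simp only [cand, Function.comp, h, if_false]
      exact IH _ h1 (by omega)
  obtain ⟨ia, hia, hja⟩ := ha.greedy k hkn hkL
  obtain ⟨ib, hib, hjb⟩ := hb.greedy k hkn hkL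
  have hnewa := not_seen_self ha hkn hkL
  have hnewb := not_seen_self hb hkn hkL
  set pa := P (wordAt a 0 (k - 0)) with hpa
  set pb := P' (wordAt b 0 (k - 0)) with hpb
  have hσp : ∀ i : Fin t, σ (pb i) = pa i := by
    intro i
    rw [hpa, hpb]
    have : wordAt a 0 (k - 0) = wordAt b 0 (k - 0) := Subsingleton.elim _ _
    rw [this]
    exact hσ _ i
  have hsymm : ∀ i : Fin t, σ.symm (pa i) = pb i := by
    intro i; rw [← hσp i]; simp
  have key : ia = ib := by
    rcases lt_trichotomy ia ib with h | h | h
    · exfalso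
      have hs := hjb ia h
      have heq : σ.symm ∘ cand a n k (pa ia) = cand b n k (pb ia) := by
        rw [hcand (pa ia), hsymm ia]
        funext j; simp [Function.comp]
      have : Seen a n k (cand a n k (pa ia)) := by
        rw [hseen, heq]; exact hs
      rw [← hia] at this
      exact hnewa this
    · exact h
    · exfalso
      have hs := hja ib h
      rw [hcand (pa ib), hsymm ib, hseen] at hs
      have : σ.symm ∘ σ ∘ cand b n k (pb ib) = cand b n k (pb ib) := by
        funext j; simp [Function.comp]
      rw [this] at hs
      rw [← hib] at hs
      exact hnewb hs
  rw [hia, hib, key, hσp]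

lemma tail_zero {t n : ℕ} [NeZero t] (hn : 2 ≤ n)
    {P : (Fin 0 → Fin t) → Fin t → Fin t}
    {a : ℕ → Fin t} {L : ℕ}
    (hG : GenSeqFrom t 0 n (zeroWord t n) P a L) (hFull : Full t n a L) :
    ∀ j, j < n - 1 → a (L - n + 1 + j) = 0 := by
  classical
  have hLn : n ≤ L := hG.len_ge
  set m := n - 1 with hm
  set v := wordAt a m (L - n + 1) with hv
  set occ : Finset ℕ :=
    (Finset.range (L - n + 2)).filter (fun q => wordAt a m q = v) with hocc
  have hmem : ∀ q, q ∈ occ ↔ q ≤ L - n + 1 ∧ wordAt a m q = v := by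
    intro q
    simp only [hocc, Finset.mem_filter, Finset.mem_range]
    constructor
    · rintro ⟨h1, h2⟩; exact ⟨by omega, h2⟩
    · rintro ⟨h1, h2⟩; exact ⟨by omega, h2⟩
  have htop : L - n + 1 ∈ occ := (hmem _).mpr ⟨le_refl _, rfl⟩
  -- S : occurrences that start an n-word
  set S : Finset ℕ := occ.filter (fun q => q ≤ L - n) with hS
  have hmemS : ∀ q, q ∈ S ↔ q ≤ L - n ∧ wordAt a m q = v := by
    intro q
    simp only [hS, Finset.mem_filter, hmem]
    constructor
    · rintro ⟨⟨h1, h2⟩, h3⟩; exact ⟨h3, h2⟩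
    · rintro ⟨h1, h2⟩; exact ⟨⟨by omega, h2⟩, h1⟩
  have hScard : S.card = t := by
    rw [← Fintype.card_fin t, ← Finset.card_univ]
    apply Finset.card_bij (fun q _ => a (q + m))
    · intro q hq; exact Finset.mem_univ _
    · intro q hq q' hq' h
      rw [hmemS] at hq hq'
      apply hG.inj q q' (by omega) (by omega)
      funext j
      have hj := j.isLt
      by_cases hc : (j : ℕ) < m
      · have e1 : a (q + (j : ℕ)) = v ⟨j, hc⟩ := congrFun hq.2 ⟨j, hc⟩
        have e2 : a (q' + (j : ℕ)) = v ⟨j, hc⟩ := congrFun hq'.2 ⟨j, hc⟩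
        show a (q + (j : ℕ)) = a (q' + (j : ℕ))
        rw [e1, e2]
      · have hjm : (j : ℕ) = m := by omega
        show a (q + (j : ℕ)) = a (q' + (j : ℕ))
        rw [hjm]; exact h
    · intro y _
      obtain ⟨r, hr, hw⟩ := hFull (fun j => if hc : (j : ℕ) < m then v ⟨j, hc⟩ else y)
      have hrS : r ∈ S := by
        rw [hmemS]
        refine ⟨by omega, ?_⟩
        funext j
        have hj := j.isLt
        have e1 : a (r + (j : ℕ)) = v ⟨(j : ℕ), hj⟩ := by
          have := congrFun hw ⟨(j : ℕ), by omega⟩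
          simpa [hj, wordAt] using this
        exact e1
      refine ⟨r, hrS, ?_⟩
      have := congrFun hw ⟨m, by omega⟩
      simpa [wordAt] using this
  -- E : occurrences that end an n-word
  set E : Finset ℕ := occ.filter (fun q => 1 ≤ q) with hE
  have hmemE : ∀ q, q ∈ E ↔ (1 ≤ q ∧ q ≤ L - n + 1) ∧ wordAt a m q = v := by
    intro q
    simp only [hE, Finset.mem_filter, hmem]
    constructor
    · rintro ⟨⟨h1, h2⟩, h3⟩; exact ⟨⟨h3, h1⟩, h2⟩
    · rintro ⟨⟨h1, h2⟩, h3⟩; exact ⟨⟨h2, h3⟩, h1⟩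
  have hEcard : E.card = t := by
    rw [← Fintype.card_fin t, ← Finset.card_univ]
    apply Finset.card_bij (fun q _ => a (q - 1))
    · intro q hq; exact Finset.mem_univ _
    · intro q hq q' hq' h
      rw [hmemE] at hq hq'
      have := hG.inj (q - 1) (q' - 1) (by omega) (by omega) ?_
      · omega
      funext j
      have hj := j.isLt
      by_cases hc : (j : ℕ) = 0
      · show a (q - 1 + (j : ℕ)) = a (q' - 1 + (j : ℕ))
        rw [hc]; simpa using h
      · have hjc : (j : ℕ) - 1 < m := by omega
        have e1 : a (q + ((j : ℕ) - 1)) = v ⟨(j : ℕ) - 1, hjc⟩ := congrFun hq.2 ⟨_, hjc⟩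
        have e2 : a (q' + ((j : ℕ) - 1)) = v ⟨(j : ℕ) - 1, hjc⟩ := congrFun hq'.2 ⟨_, hjc⟩
        show a (q - 1 + (j : ℕ)) = a (q' - 1 + (j : ℕ))
        have e3 : q - 1 + (j : ℕ) = q + ((j : ℕ) - 1) := by omega
        have e4 : q' - 1 + (j : ℕ) = q' + ((j : ℕ) - 1) := by omega
        rw [e3, e4, e1, e2]
    · intro y _
      obtain ⟨r, hr, hw⟩ := hFull
        (fun j => if hc : 0 < (j : ℕ) then v ⟨(j : ℕ) - 1, by have := j.isLt; omega⟩ else y)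
      have hrE : r + 1 ∈ E := by
        rw [hmemE]
        refine ⟨⟨by omega, by omega⟩, ?_⟩
        funext j
        have hj := j.isLt
        have e1 : a (r + ((j : ℕ) + 1)) = v ⟨(j : ℕ), hj⟩ := by
          have := congrFun hw ⟨(j : ℕ) + 1, by omega⟩
          simpa [wordAt] using this
        show a (r + 1 + (j : ℕ)) = v j
        have e3 : r + 1 + (j : ℕ) = r + ((j : ℕ) + 1) := by omega
        rw [e3, e1]
      refine ⟨r + 1, hrE, ?_⟩
      have := congrFun hw ⟨0, by omega⟩
      simpa [wordAt] using this
  -- occ.card = t + 1 via S, then 0 ∈ occ via E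
  have hSerase : S = occ.erase (L - n + 1) := by
    ext q
    rw [Finset.mem_erase, hmemS, hmem]
    constructor
    · rintro ⟨h1, h2⟩; exact ⟨by omega, by omega, h2⟩
    · rintro ⟨h1, h2, h3⟩; exact ⟨by omega, h3⟩
  have hocccard : occ.card = t + 1 := by
    have := Finset.card_erase_of_mem htop
    rw [← hSerase, hScard] at this
    have hpos : 1 ≤ occ.card := Finset.card_pos.mpr ⟨_, htop⟩
    omega
  have h0 : 0 ∈ occ := by
    by_contra h0
    have hEeq : E = occ := by
      ext q
      rw [hmemE, hmem]
      constructor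
      · rintro ⟨⟨h1, h2⟩, h3⟩; exact ⟨h2, h3⟩
      · rintro ⟨h1, h2⟩
        refine ⟨⟨?_, h1⟩, h2⟩
        rcases Nat.eq_zero_or_pos q with h | h
        · exact absurd ((hmem q).mpr ⟨h1, h2⟩) (h ▸ h0)
        · omega
    rw [hEeq, hocccard] at hEcard
    omega
  -- conclude
  have hv0 : wordAt a m 0 = v := ((hmem 0).mp h0).2
  intro j hj
  have e1 : a (L - n + 1 + j) = v ⟨j, hj⟩ := (congrFun hv ⟨j, hj⟩).symm
  have e2 : a (0 + j) = v ⟨j, hj⟩ := congrFun hv0 ⟨j, hj⟩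
  have e3 : a j = 0 := by
    have := hG.init ⟨j, by omega⟩
    simpa [zeroWord] using this
  rw [e1, ← e2]
  simpa using e3

lemma least_pref_zero {t n : ℕ} [NeZero t] (ht : 2 ≤ t) (hn : 2 ≤ n)
    {P : (Fin 0 → Fin t) → Fin t → Fin t} (hP : IsPrefFun t 0 P)
    {a : ℕ → Fin t} {L : ℕ}
    (hG : GenSeqFrom t 0 n (zeroWord t n) P a L) (hFull : Full t n a L)
    (w0 : Fin 0 → Fin t) :
    P w0 ⟨t - 1, by omega⟩ = 0 := by
  set c : Fin t := P w0 ⟨t - 1, by omega⟩ with hc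
  by_contra hc0
  have hLn : n ≤ L := hG.len_ge
  obtain ⟨q, hq, hw⟩ := hFull (fun _ => c)
  have hcoord : ∀ j : ℕ, j < n → a (q + j) = c := by
    intro j hj; exact congrFun hw ⟨j, hj⟩
  have hq1 : 1 ≤ q := by
    rcases Nat.eq_zero_or_pos q with h | h
    · exfalso
      have h1 : a 0 = c := by have := hcoord 0 (by omega); simpa [h] using this
      have h2 : a 0 = 0 := by
        have := hG.init ⟨0, by omega⟩; simpa [zeroWord] using this
      exact hc0 (h1 ▸ h2)
    · exact h
  rcases Nat.lt_or_ge (q + n) L with hqL | hqL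
  · -- contradiction : all candidates at k = q + n are seen
    set k := q + n with hk
    set k0 := q + n - 1 with hk0
    obtain ⟨i0, hi0, hj0⟩ := hG.greedy k0 (by omega) (by omega)
    have hPeq : P (wordAt a 0 (k0 - 0)) = P w0 := congrArg P (Subsingleton.elim _ _)
    have hak0 : a k0 = c := by
      have := hcoord (n - 1) (by omega)
      have e : q + (n - 1) = k0 := by omega
      rwa [e] at this
    have hi0t : i0 = ⟨t - 1, by omega⟩ := by
      apply (hP (wordAt a 0 (k0 - 0))).injective
      rw [← hi0, hak0, hc, hPeq]
    have hcand_eq : ∀ x : Fin t, cand a n k0 x = cand a n k x := by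
      intro x
      funext j'
      have hj' := j'.isLt
      by_cases hlast : (j' : ℕ) + 1 = n
      · simp [cand, hlast]
      · have e1 : k0 - (n - 1) + (j' : ℕ) = q + (j' : ℕ) := by omega
        have e2 : k - (n - 1) + (j' : ℕ) = q + ((j' : ℕ) + 1) := by omega
        simp only [cand, hlast, if_false, e1, e2]
        rw [hcoord _ (by omega), hcoord _ (by omega)]
    have hall : ∀ x : Fin t, Seen a n k (cand a n k x) := by
      intro x
      obtain ⟨j, hjx⟩ := (hP (wordAt a 0 (k0 - 0))).surjective x
      by_cases hjt : (j : ℕ) = t - 1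
      · -- x = c ; cand is the word at q itself
        have hxc : x = c := by
          rw [← hjx, hc, hPeq]
          congr 1
          exact Fin.ext hjt
        refine ⟨q, by omega, ?_⟩
        rw [hxc, hw]
        funext j'
        have hj' := j'.isLt
        by_cases hlast : (j' : ℕ) + 1 = n
        · simp [cand, hlast]
        · have e2 : k - (n - 1) + (j' : ℕ) = q + ((j' : ℕ) + 1) := by omega
          simp only [cand, hlast, if_false, e2]
          exact (hcoord ((j' : ℕ) + 1) (by omega)).symm
      · have hjlt : j < i0 := by
          rw [hi0t]
          exact Fin.lt_def.mpr (by have := j.isLt; simp; omega)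
        obtain ⟨p, hp, hpw⟩ := hj0 j hjlt
        rw [hjx, hcand_eq x] at hpw
        exact ⟨p, by omega, hpw⟩
    exact not_seen_self hG (by omega) (by omega) (hall (a k))
  · -- q + n = L : last symbol is c, but tail is zero
    have hqn : q + n = L := by omega
    have h1 : a (L - 1) = c := by
      have := hcoord (n - 1) (by omega)
      have e : q + (n - 1) = L - 1 := by omega
      rwa [e] at this
    have h2 : a (L - 1) = 0 := by
      have := tail_zero hn hG hFull (n - 2) (by omega)
      have e : L - n + 1 + (n - 2) = L - 1 := by omega
      rwa [e] at this
    exact hc0 (h1 ▸ h2)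

lemma word1 {t : ℕ} (x : ℕ → Fin t) (p : ℕ) : wordAt x 1 p = fun _ => x p := by
  funext j
  have hj : (j : ℕ) = 0 := by omega
  simp [wordAt, hj]

lemma cand1 {t : ℕ} (x : ℕ → Fin t) (k : ℕ) (c : Fin t) :
    cand x 1 k c = fun _ => c := by
  funext j
  have hj : (j : ℕ) = 0 := by omega
  simp [cand, hj]

lemma seen1 {t : ℕ} (x : ℕ → Fin t) (k : ℕ) (c : Fin t) :
    Seen x 1 k (fun _ => c) ↔ ∃ p, p < k ∧ x p = c := by
  constructor
  · rintro ⟨p, hp, hw⟩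
    exact ⟨p, by omega, congrFun hw ⟨0, by omega⟩⟩
  · rintro ⟨p, hp, hx⟩
    exact ⟨p, by omega, by rw [word1, hx]⟩

lemma ginv {t : ℕ} (ht : 1 ≤ t) {y : ℕ} (hy : y < t) : (t - (t - y) % t) % t = y := by
  rcases Nat.eq_zero_or_pos y with h | h
  · subst h; simp
  · have h1 : (t - y) % t = t - y := Nat.mod_eq_of_lt (by omega)
    rw [h1]
    have h2 : t - (t - y) = y := by omega
    rw [h2, Nat.mod_eq_of_lt hy]

lemma ford_n1 {t : ℕ} [NeZero t] (ht : 2 ≤ t)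
    {P' : (Fin 0 → Fin t) → Fin t → Fin t}
    (hQ : ∀ (w : Fin 0 → Fin t) (i : Fin t), (P' w i : ℕ) = t - 1 - (i : ℕ))
    {b : ℕ → Fin t} {L' : ℕ}
    (hb : GenSeqFrom t 0 1 (zeroWord t 1) P' b L') (hbFull : Full t 1 b L') :
    L' = t ∧ ∀ k, k < t → (b k : ℕ) = (t - k) % t := by
  have hL : L' = t := by
    have := length_eq (le_refl 1) hb.len_ge hb.inj hbFull
    simpa using this
  refine ⟨hL, ?_⟩
  intro k
  induction k using Nat.strong_induction_on with
  | _ k IH =>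
  intro hk
  rcases Nat.eq_zero_or_pos k with h0 | h0
  · subst h0
    have := hb.init ⟨0, by omega⟩
    simp only [zeroWord] at this
    simp [this]
  -- k ≥ 1
  obtain ⟨i, hi, hji⟩ := hb.greedy k (by omega) (by omega)
  have hQv : ∀ i : Fin t, (P' (wordAt b 0 (k - 0)) i : ℕ) = t - 1 - (i : ℕ) := hQ _
  have hnew := not_seen_self (k := k) hb (by omega) (by omega)
  have hunseen : ¬ ∃ p, p < k ∧ (b p : ℕ) = t - k := by
    rintro ⟨p, hp, hbp⟩
    rw [IH p hp (by omega)] at hbp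
    rcases Nat.eq_zero_or_pos p with h | h
    · subst h; simp at hbp; omega
    · rw [Nat.mod_eq_of_lt (by omega)] at hbp
      omega
  have hile : (i : ℕ) ≤ k - 1 := by
    by_contra hgt
    push_neg at hgt
    have hjlt : (⟨k - 1, by omega⟩ : Fin t) < i := Fin.lt_def.mpr (by simpa using hgt)
    have hs := hji _ hjlt
    rw [cand1, seen1] at hs
    obtain ⟨p, hp, hbp⟩ := hs
    exact hunseen ⟨p, hp, by rw [hbp, hQv]; simp; omega⟩
  have hige : k - 1 ≤ (i : ℕ) := by
    by_contra hlt
    push_neg at hlt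
    -- then b (i+1) = Q i = b k, seen, contradicting newness
    apply hnew
    rw [hi, cand1, seen1]
    refine ⟨(i : ℕ) + 1, by omega, ?_⟩
    apply Fin.ext
    rw [IH _ (by omega) (by omega), hQv, Nat.mod_eq_of_lt (by omega)]
    omega
  have hik : (i : ℕ) = k - 1 := by omega
  rw [hi, hQv, hik, Nat.mod_eq_of_lt (by omega)]
  omega

/-- Every de Bruijn sequence of preference function complexity zero
(i.e. generated from `0^n` by a span-`0` preference function) is equivalent, up to a
permutation of the alphabet applied symbolwise, to the Ford (prefer-higher) sequence
of the same order, i.e. the sequence generated by the priority listing `(t-1,…,1,0)`. -/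
theorem statement_14 (t n : ℕ) [NeZero t] (ht : 2 ≤ t) (hn : 1 ≤ n)
    (P : (Fin 0 → Fin t) → Fin t → Fin t) (hP : IsPrefFun t 0 P)
    (a : ℕ → Fin t) (L : ℕ)
    (hGen : GenSeqFrom t 0 n (zeroWord t n) P a L) (hFull : Full t n a L) :
    ∃ σ : Equiv.Perm (Fin t), ∀ (b : ℕ → Fin t) (L' : ℕ),
      GenSeqFrom t 0 n (zeroWord t n)
        (fun _ i => ⟨t - 1 - (i : ℕ), by have := i.isLt; omega⟩) b L' →
      Full t n b L' →
      L' = L ∧ ∀ i, i < L → a i = σ (b i) := by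
  have hL : L = t ^ n + n - 1 := length_eq hn hGen.len_ge hGen.inj hFull
  rcases Nat.lt_or_ge n 2 with hn1 | hn2
  · -- n = 1
    have hn1' : n = 1 := by omega
    subst hn1'
    have hLt : L = t := by simpa using hL
    have hainj : Function.Injective (fun x : Fin t => a ((t - (x : ℕ)) % t)) := by
      intro x x' h
      simp only at h
      have h1 := hGen.inj ((t - (x : ℕ)) % t) ((t - (x' : ℕ)) % t)
        (by have := Nat.mod_lt (t - (x : ℕ)) (show 0 < t by omega); omega)
        (by have := Nat.mod_lt (t - (x' : ℕ)) (show 0 < t by omega); omega)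
        (by rw [word1, word1, h])
      apply Fin.ext
      have := congrArg (fun z => (t - z) % t) h1
      simpa [ginv (by omega) x.isLt, ginv (by omega) x'.isLt] using this
    have hbij := Finite.injective_iff_bijective.mp hainj
    refine ⟨Equiv.ofBijective _ hbij, ?_⟩
    intro b L' hb hbFull
    obtain ⟨hL', hbv⟩ := ford_n1 ht (fun w i => rfl) hb hbFull
    refine ⟨by omega, ?_⟩
    intro i hi
    have hit : i < t := by omega
    show a i = (Equiv.ofBijective _ hbij) (b i)
    simp only [Equiv.ofBijective_apply]
    congr 1
    rw [hbv i hit, ginv (by omega) hit]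
  · -- n ≥ 2
    set w0 : Fin 0 → Fin t := Fin.elim0 with hw0
    have hp0 : P w0 ⟨t - 1, by omega⟩ = 0 := least_pref_zero ht hn2 hP hGen hFull w0
    have hqinv : Function.Involutive
        (fun i : Fin t => (⟨t - 1 - (i : ℕ), by have := i.isLt; omega⟩ : Fin t)) := by
      intro i
      apply Fin.ext
      have := i.isLt
      simp
      omega
    set QE : Equiv.Perm (Fin t) := hqinv.toPerm _ with hQE
    set pe : Equiv.Perm (Fin t) := Equiv.ofBijective _ (hP w0) with hpe
    refine ⟨QE.trans pe, ?_⟩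
    intro b L' hb hbFull
    have hL' : L' = L := by
      rw [hL]; exact length_eq hn hb.len_ge hb.inj hbFull
    subst hL'
    refine ⟨rfl, ?_⟩
    have hσ0 : (QE.trans pe) 0 = 0 := by
      show pe (QE 0) = 0
      have : QE 0 = ⟨t - 1, by omega⟩ := by
        apply Fin.ext
        simp [hQE, Function.Involutive.toPerm]
      rw [this]
      exact hp0
    have hσ : ∀ (w : Fin 0 → Fin t) (i : Fin t),
        (QE.trans pe) ((fun (_ : Fin 0 → Fin t) (i : Fin t) =>
          (⟨t - 1 - (i : ℕ), by have := i.isLt; omega⟩ : Fin t)) w i) = P w i := by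
      intro w i
      show pe (QE _) = P w i
      have h1 : QE (⟨t - 1 - (i : ℕ), by have := i.isLt; omega⟩ : Fin t) = i := hqinv i
      rw [h1]
      show P w0 i = P w i
      exact congrArg (fun u => P u i) (Subsingleton.elim w0 w)
    exact fun i hi => simulate hn hGen hb (QE.trans pe) hσ0 hσ i hi


end DeBruijnPaper
end
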